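/- Let f, g : K → K be functions and λ₁, λ₂, λ₃ ∈ K be such that f(λ₁), f(λ₂), f(λ₃) are pairwise distinct. Define, for distinct k, l ∈ {1,2,3}, t_{kl} = (g(λ_l)/(f(λ_k) − f(λ_l)))·C_{kl} ∈ U(g)^{⊗3}. Then t satisfies the classical Yang–Baxter equation: YB(t)_{123} = 0. -/

import Mathlib

/-!
For `B`-dual bases `(eᵢ)`, `(e'ᵢ)` and any `B`-adjoint pair `(u, v)` one has
`∑ u(eᵢ) ⊗ e'ᵢ = ∑ eᵢ ⊗ v(e'ᵢ)`, by expanding both sides in the two bases. Applied to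
`u = ad_x` this is the invariance of the Casimir tensor, and placed in the right tensor factors
it gives `[C₁₂, C₁₃] = -[C₁₂, C₂₃] = [C₁₃, C₂₃]`. Hence `YB(t)₁₂₃` is
`(c₁₂c₁₃ - c₁₂c₂₃ - c₁₃c₃₂) • [C₁₂, C₁₃]`, where `t_kl = c_kl • C_kl`, and this coefficient is
`g(λ₂)g(λ₃) ((f₂ - f₃) - (f₁ - f₃) + (f₁ - f₂)) / ((f₁ - f₂)(f₁ - f₃)(f₂ - f₃)) = 0`.
-/

open scoped TensorProduct

noncomputable section

/-- `Σ i, u i ⊗ v i ⊗ 1` in `U(g)⊗U(g)⊗U(g)`: the tensor with factors in positions 1, 2. -/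
def tensor12 (K : Type*) {L I : Type*} [Field K] [LieRing L] [LieAlgebra K L]
    [Fintype I] (u v : I → L) :
    UniversalEnvelopingAlgebra K L ⊗[K]
      (UniversalEnvelopingAlgebra K L ⊗[K] UniversalEnvelopingAlgebra K L) :=
  ∑ i, UniversalEnvelopingAlgebra.ι K (u i) ⊗ₜ[K]
        (UniversalEnvelopingAlgebra.ι K (v i) ⊗ₜ[K] 1)

/-- `Σ i, u i ⊗ 1 ⊗ v i`: the tensor with factors in positions 1, 3. -/
def tensor13 (K : Type*) {L I : Type*} [Field K] [LieRing L] [LieAlgebra K L]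
    [Fintype I] (u v : I → L) :
    UniversalEnvelopingAlgebra K L ⊗[K]
      (UniversalEnvelopingAlgebra K L ⊗[K] UniversalEnvelopingAlgebra K L) :=
  ∑ i, UniversalEnvelopingAlgebra.ι K (u i) ⊗ₜ[K]
        ((1 : UniversalEnvelopingAlgebra K L) ⊗ₜ[K] UniversalEnvelopingAlgebra.ι K (v i))

/-- `Σ i, 1 ⊗ u i ⊗ v i`: the tensor with factors in positions 2, 3. -/
def tensor23 (K : Type*) {L I : Type*} [Field K] [LieRing L] [LieAlgebra K L]
    [Fintype I] (u v : I → L) :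
    UniversalEnvelopingAlgebra K L ⊗[K]
      (UniversalEnvelopingAlgebra K L ⊗[K] UniversalEnvelopingAlgebra K L) :=
  ∑ i, (1 : UniversalEnvelopingAlgebra K L) ⊗ₜ[K]
        (UniversalEnvelopingAlgebra.ι K (u i) ⊗ₜ[K] UniversalEnvelopingAlgebra.ι K (v i))

open LinearMap (BilinForm IsAdjointPair)
open Module (Basis)

section DualBases

variable {R V M I : Type*} [CommRing R] [AddCommGroup V] [Module R V] [AddCommGroup M]
  [Module R M] [DecidableEq I] {B : BilinForm R V} {b b' : Basis I R V}

theorem repr_apply_eq_apply_dual (hdual : ∀ i j, B (b i) (b' j) = if i = j then 1 else 0)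
    (x : V) (j : I) : b.repr x j = B x (b' j) := by
  have : b.coord j = B.flip (b' j) := b.ext fun i => by
    simp [hdual, Finsupp.single_apply]
  exact LinearMap.congr_fun this x

theorem dual_repr_apply_eq_apply (hdual : ∀ i j, B (b i) (b' j) = if i = j then 1 else 0)
    (y : V) (j : I) : b'.repr y j = B (b j) y := by
  have : b'.coord j = B (b j) := b'.ext fun i => by
    simp [hdual, Finsupp.single_apply, eq_comm]
  exact LinearMap.congr_fun this y

theorem sum_apply_dual_of_isAdjointPair [Fintype I]
    (hdual : ∀ i j, B (b i) (b' j) = if i = j then 1 else 0)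
    {u v : V → V} (huv : IsAdjointPair B B u v) (φ : V →ₗ[R] V →ₗ[R] M) :
    ∑ i, φ (u (b i)) (b' i) = ∑ i, φ (b i) (v (b' i)) := calc
  ∑ i, φ (u (b i)) (b' i) = ∑ i, ∑ j, B (u (b j)) (b' i) • φ (b i) (b' j) := by
    rw [Finset.sum_comm]
    refine Finset.sum_congr rfl fun j _ => ?_
    conv_lhs => rw [← b.sum_repr (u (b j))]
    simp [map_sum, repr_apply_eq_apply_dual hdual]
  _ = ∑ i, φ (b i) (v (b' i)) := by
    refine Finset.sum_congr rfl fun i _ => ?_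
    conv_rhs => rw [← b'.sum_repr (v (b' i))]
    simp [map_sum, dual_repr_apply_eq_apply hdual, huv _ _]

end DualBases

section AssociativeAlgebra

theorem Ring.sum_lie_sum {A ι κ : Type*} [Ring A] (s : Finset ι) (t : Finset κ) (f : ι → A)
    (g : κ → A) : ⁅∑ i ∈ s, f i, ∑ j ∈ t, g j⁆ = ∑ i ∈ s, ∑ j ∈ t, ⁅f i, g j⁆ :=
  let _ := LieRing.ofAssociativeRing (A := A)
  _root_.sum_lie_sum s t f g

theorem Ring.smul_lie_smul {K A : Type*} [CommSemiring K] [Ring A] [Module K A]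
    [IsScalarTower K A A] [SMulCommClass K A A] (c d : K) (x y : A) :
    ⁅c • x, d • y⁆ = (c * d) • ⁅x, y⁆ := by
  simp only [Ring.lie_def, mul_smul_comm, smul_mul_assoc, smul_sub, smul_smul, mul_comm c d]

variable {K A : Type*} [CommRing K] [Ring A] [Algebra K A]

theorem lie_tmul_tmul_one_tmul_one_tmul (a b c d : A) :
    ⁅a ⊗ₜ[K] (b ⊗ₜ[K] (1 : A)), c ⊗ₜ[K] ((1 : A) ⊗ₜ[K] d)⁆ = ⁅a, c⁆ ⊗ₜ[K] (b ⊗ₜ[K] d) := by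
  simp [Ring.lie_def, TensorProduct.sub_tmul]

theorem lie_tmul_tmul_one_one_tmul_tmul (a b c d : A) :
    ⁅a ⊗ₜ[K] (b ⊗ₜ[K] (1 : A)), (1 : A) ⊗ₜ[K] (c ⊗ₜ[K] d)⁆ = a ⊗ₜ[K] (⁅b, c⁆ ⊗ₜ[K] d) := by
  simp [Ring.lie_def, TensorProduct.tmul_sub, TensorProduct.sub_tmul]

theorem lie_tmul_one_tmul_one_tmul_tmul (a b c d : A) :
    ⁅a ⊗ₜ[K] ((1 : A) ⊗ₜ[K] b), (1 : A) ⊗ₜ[K] (c ⊗ₜ[K] d)⁆ = a ⊗ₜ[K] (c ⊗ₜ[K] ⁅b, d⁆) := by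
  simp [Ring.lie_def, TensorProduct.tmul_sub]

end AssociativeAlgebra

section Casimir

variable {K L I : Type*} [Field K] [LieRing L] [LieAlgebra K L] [Fintype I]

local notation "ι" => UniversalEnvelopingAlgebra.ι K

theorem lie_tensor12_tensor13 (u v w z : I → L) :
    ⁅tensor12 K u v, tensor13 K w z⁆ = ∑ i, ∑ j, ι ⁅u i, w j⁆ ⊗ₜ[K] (ι (v i) ⊗ₜ[K] ι (z j)) := by
  simp only [tensor12, tensor13, Ring.sum_lie_sum, lie_tmul_tmul_one_tmul_one_tmul, LieHom.map_lie]

theorem lie_tensor12_tensor23 (u v w z : I → L) :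
    ⁅tensor12 K u v, tensor23 K w z⁆ = ∑ i, ∑ j, ι (u i) ⊗ₜ[K] (ι ⁅v i, w j⁆ ⊗ₜ[K] ι (z j)) := by
  simp only [tensor12, tensor23, Ring.sum_lie_sum, lie_tmul_tmul_one_one_tmul_tmul, LieHom.map_lie]

theorem lie_tensor13_tensor23 (u v w z : I → L) :
    ⁅tensor13 K u v, tensor23 K w z⁆ = ∑ i, ∑ j, ι (u i) ⊗ₜ[K] (ι (w j) ⊗ₜ[K] ι ⁅v i, z j⁆) := by
  simp only [tensor13, tensor23, Ring.sum_lie_sum, lie_tmul_one_tmul_one_tmul_tmul, LieHom.map_lie]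

variable [DecidableEq I] {B : BilinForm K L} {e e' : Basis I K L}

theorem lie_casimir12_casimir23 (hBinv : ∀ x y z, B ⁅x, y⁆ z = B x ⁅y, z⁆)
    (hdual : ∀ i j, B (e i) (e' j) = if i = j then 1 else 0) :
    ⁅tensor12 K e e', tensor23 K e e'⁆ = -⁅tensor12 K e e', tensor13 K e e'⁆ := by
  rw [lie_tensor12_tensor23, lie_tensor12_tensor13, Finset.sum_comm]
  conv_rhs => rw [Finset.sum_comm]
  rw [← Finset.sum_neg_distrib]
  refine Finset.sum_congr rfl fun j _ => ?_
  -- `ι` is a Lie hom for the commutator bracket of `U(g)`, which is not a global instance.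
  let _ := LieRing.ofAssociativeRing (A := UniversalEnvelopingAlgebra K L)
  have key := sum_apply_dual_of_isAdjointPair hdual (u := (⁅·, e j⁆)) (v := (-⁅·, e j⁆))
    (fun x y => by dsimp only; rw [hBinv, lie_skew])
    ((TensorProduct.mk K _ _).compl₁₂ (UniversalEnvelopingAlgebra.ι K).toLinearMap
      ((TensorProduct.mk K _ _).flip (ι (e' j)) ∘ₗ (UniversalEnvelopingAlgebra.ι K).toLinearMap))
  simp only [LinearMap.compl₁₂_apply, LinearMap.comp_apply, LinearMap.flip_apply,
    TensorProduct.mk_apply, LieHom.coe_toLinearMap, map_neg, Finset.sum_neg_distrib] at key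
  exact neg_eq_iff_eq_neg.mp key.symm

theorem lie_casimir13_casimir23 (hBinv : ∀ x y z, B ⁅x, y⁆ z = B x ⁅y, z⁆)
    (hdual : ∀ i j, B (e i) (e' j) = if i = j then 1 else 0) :
    ⁅tensor13 K e e', tensor23 K e e'⁆ = -⁅tensor12 K e e', tensor23 K e e'⁆ := by
  rw [lie_tensor13_tensor23, lie_tensor12_tensor23, ← Finset.sum_neg_distrib]
  refine Finset.sum_congr rfl fun i _ => ?_
  let _ := LieRing.ofAssociativeRing (A := UniversalEnvelopingAlgebra K L)
  have key := sum_apply_dual_of_isAdjointPair hdual (u := (⁅e' i, ·⁆)) (v := (-⁅e' i, ·⁆))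
    (fun x y => by dsimp only; rw [← lie_skew, map_neg, LinearMap.neg_apply, hBinv, map_neg])
    (((TensorProduct.mk K _ _).compl₁₂ (UniversalEnvelopingAlgebra.ι K).toLinearMap
      (UniversalEnvelopingAlgebra.ι K).toLinearMap).compr₂ (TensorProduct.mk K _ _ (ι (e i))))
  simp only [LinearMap.compr₂_apply, LinearMap.compl₁₂_apply, TensorProduct.mk_apply,
    LieHom.coe_toLinearMap, map_neg, Finset.sum_neg_distrib] at key
  exact neg_eq_iff_eq_neg.mp key.symm

end Casimir

theorem yangBaxter_coeff_eq_zero {K : Type*} [Field K] {a b c : K} (hab : a ≠ b) (hac : a ≠ c)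
    (hbc : b ≠ c) (p q : K) :
    p / (a - b) * (q / (a - c)) - p / (a - b) * (q / (b - c)) - q / (a - c) * (p / (c - b))
      = 0 := by
  field_simp [sub_ne_zero.mpr hab, sub_ne_zero.mpr hac, sub_ne_zero.mpr hbc]
  ring

theorem cybe_solution_i_general
    {K L I : Type*} [Field K] [LieRing L] [LieAlgebra K L]
    [Fintype I] [DecidableEq I]
    (B : LinearMap.BilinForm K L)
    (hBinv : ∀ x y z, B ⁅x, y⁆ z = B x ⁅y, z⁆)
    (hBnd : B.Nondegenerate)
    (e : Module.Basis I K L) (e' : I → L)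
    (hdual : ∀ i j, B (e i) (e' j) = if i = j then 1 else 0)
    (f g : K → K) (l1 l2 l3 : K)
    (h12 : f l1 ≠ f l2) (h13 : f l1 ≠ f l3) (h23 : f l2 ≠ f l3) :
    ⁅(g l2 / (f l1 - f l2)) • tensor12 K (⇑e) e',
      (g l3 / (f l1 - f l3)) • tensor13 K (⇑e) e'⁆
    + ⁅(g l2 / (f l1 - f l2)) • tensor12 K (⇑e) e',
        (g l3 / (f l2 - f l3)) • tensor23 K (⇑e) e'⁆
    - ⁅(g l3 / (f l1 - f l3)) • tensor13 K (⇑e) e',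
        (g l2 / (f l3 - f l2)) • tensor23 K (⇑e) e'⁆ = 0 := by
  obtain ⟨b', rfl⟩ : ∃ b' : Basis I K L, ⇑b' = e' :=
    ⟨_, (B.flip.dualBasis_eq_iff hBnd.flip e e').2 fun i j => hdual j i⟩
  rw [Ring.smul_lie_smul _ _ (tensor12 K e b'), Ring.smul_lie_smul _ _ (tensor12 K e b'),
    Ring.smul_lie_smul _ _ (tensor13 K e b'), lie_casimir13_casimir23 hBinv hdual,
    lie_casimir12_casimir23 hBinv hdual]
  linear_combination (norm := module)
    yangBaxter_coeff_eq_zero h12 h13 h23 (g l2) (g l3) • ⁅tensor12 K e b', tensor13 K e b'⁆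

/-- Solution (i) of the classification: `t_{kl} = (g(λ_l)/(f(λ_k) − f(λ_l)))·C_{kl}`
satisfies the classical Yang–Baxter equation `YB(t)₁₂₃ = 0`. -/
theorem cybe_solution_i
    {K L I : Type*} [Field K] [CharZero K] [LieRing L] [LieAlgebra K L]
    [Module.Finite K L] [Fintype I] [DecidableEq I]
    (B : LinearMap.BilinForm K L)
    (hBsymm : ∀ x y, B x y = B y x)
    (hBinv : ∀ x y z, B ⁅x, y⁆ z = B x ⁅y, z⁆)
    (hBnd : B.Nondegenerate)
    (e : Module.Basis I K L) (e' : I → L)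
    (hdual : ∀ i j, B (e i) (e' j) = if i = j then 1 else 0)
    (f g : K → K) (l1 l2 l3 : K)
    (h12 : f l1 ≠ f l2) (h13 : f l1 ≠ f l3) (h23 : f l2 ≠ f l3) :
    ⁅(g l2 / (f l1 - f l2)) • tensor12 K (⇑e) e',
      (g l3 / (f l1 - f l3)) • tensor13 K (⇑e) e'⁆
    + ⁅(g l2 / (f l1 - f l2)) • tensor12 K (⇑e) e',
        (g l3 / (f l2 - f l3)) • tensor23 K (⇑e) e'⁆
    - ⁅(g l3 / (f l1 - f l3)) • tensor13 K (⇑e) e',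
        (g l2 / (f l3 - f l2)) • tensor23 K (⇑e) e'⁆ = 0 :=
  cybe_solution_i_general B hBinv hBnd e e' hdual f g l1 l2 l3 h12 h13 h23
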